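/- Let Λ be a strongly G-graded ring with identity component Δ. Then each homogeneous component Λ_g is a finitely generated projective generator (progenerator) as a left Δ-module. -/

import Mathlib

/-!
Strongness gives `1 ∈ Λ_{g⁻¹} Λ_g` and `1 ∈ Λ_g Λ_{g⁻¹}`. Writing `1 = ∑ uᵢ vᵢ` with `uᵢ ∈ Λ_{g⁻¹}`,
`vᵢ ∈ Λ_g`, every `a ∈ Λ_g` is `a = ∑ (a uᵢ) vᵢ`, and `a ↦ a uᵢ` is a left `Δ`-linear map `Λ_g → Δ`:
a finite dual basis. Writing `1 = ∑ wⱼ zⱼ` with `wⱼ ∈ Λ_g`, `zⱼ ∈ Λ_{g⁻¹}` puts `1` in the trace ideal.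
-/

open Pointwise
/-- A strong grading of the ring `Λ` by the group `G`: `Λ` is the internal direct
sum of the additive subgroups `A g`, and `A g * A h = A (g * h)` for all `g, h`. -/
structure IsStrongGrading {G Λ : Type*} [Group G] [Ring Λ] [DecidableEq G]
    (A : G → AddSubgroup Λ) : Prop where
  internal : DirectSum.IsInternal A
  one_mem : (1 : Λ) ∈ A 1
  mul_mem : ∀ (g h : G), ∀ a ∈ A g, ∀ b ∈ A h, a * b ∈ A (g * h)
  strong : ∀ g h : G, A (g * h) ≤ AddSubgroup.closure ((A g : Set Λ) * (A h : Set Λ))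

/-- `Λ_g ≅ Λ_h` as `Δ`-bimodules (`Δ = Λ_1`): an additive equivalence compatible
with left and right multiplication by elements of the identity component. -/
def ComponentBimodIso {G Λ : Type*} [Group G] [Ring Λ]
    (A : G → AddSubgroup Λ) (g h : G) : Prop :=
  ∃ f : A g ≃+ A h,
    (∀ d ∈ A (1 : G), ∀ x y : A g, (y : Λ) = d * (x : Λ) → ((f y : Λ) = d * (f x : Λ))) ∧
    (∀ d ∈ A (1 : G), ∀ x y : A g, (y : Λ) = (x : Λ) * d → ((f y : Λ) = (f x : Λ) * d))

theorem AddSubgroup.exists_fin_sum_mul_of_mem_closure_mul {L : Type*} [NonUnitalNonAssocRing L]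
    (S : AddSubgroup L) (T : Set L) {c : L} (hc : c ∈ AddSubgroup.closure ((S : Set L) * T)) :
    ∃ (n : ℕ) (x y : Fin n → L), (∀ i, x i ∈ S) ∧ (∀ i, y i ∈ T) ∧ ∑ i, x i * y i = c := by
  rw [← Submodule.span_int_eq_addSubgroupClosure, Submodule.mem_toAddSubgroup,
    Submodule.mem_span_set'] at hc
  obtain ⟨n, k, st, rfl⟩ := hc
  choose s hs t ht hst using fun i => (st i).2
  -- the integer coefficients are absorbed into the left factors
  refine ⟨n, fun i => k i • s i, t, fun i => AddSubgroup.zsmul_mem S (hs i) (k i), ht, ?_⟩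
  simp only [smul_mul_assoc, hst]

namespace IsStrongGrading

variable {G Λ : Type*} [Group G] [Ring Λ] [DecidableEq G] {A : G → AddSubgroup Λ}

theorem exists_sum_mul_eq_one (hA : IsStrongGrading A) {g h : G} (hgh : g * h = 1) :
    ∃ (n : ℕ) (x y : Fin n → Λ), (∀ i, x i ∈ A g) ∧ (∀ i, y i ∈ A h) ∧ ∑ i, x i * y i = 1 := by
  have hone : (1 : Λ) ∈ A (g * h) := hgh ▸ hA.one_mem
  exact AddSubgroup.exists_fin_sum_mul_of_mem_closure_mul (A g) (A h) (hA.strong g h hone)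

end IsStrongGrading

/-- Each homogeneous component `Λ_g` of a strongly `G`-graded
ring is a progenerator as a left `Δ`-module: it is finitely generated projective
(witnessed by a finite dual basis, where left `Δ`-linear functionals
`Λ_g → Δ` are given by right multiplication by elements of `Λ_{g⁻¹}`), and a
generator (its trace ideal contains `1`). -/
theorem component_progenerator {G Λ : Type*} [Group G] [Ring Λ] [DecidableEq G]
    (A : G → AddSubgroup Λ) (hA : IsStrongGrading A) (g : G) :
    (∃ (n : ℕ) (x y : Fin n → Λ),
        (∀ i, x i ∈ A g) ∧ (∀ i, y i ∈ A g⁻¹) ∧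
        ∀ a ∈ A g, a = ∑ i, (a * y i) * x i) ∧
    (∃ (m : ℕ) (w z : Fin m → Λ),
        (∀ j, w j ∈ A g) ∧ (∀ j, z j ∈ A g⁻¹) ∧
        ∑ j, w j * z j = 1) := by
  constructor
  · obtain ⟨n, u, v, hu, hv, huv⟩ := hA.exists_sum_mul_eq_one (inv_mul_cancel g)
    refine ⟨n, v, u, hv, hu, fun a _ => ?_⟩
    calc a = a * ∑ i, u i * v i := by rw [huv, mul_one]
      _ = ∑ i, (a * u i) * v i := by simp only [Finset.mul_sum, mul_assoc]
  · exact hA.exists_sum_mul_eq_one (mul_inv_cancel g)
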